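/- arXiv:2204.08040 — 9 statements merged into one kernel-verified Lean document; each statement's English description precedes it below -/
import Mathlib

section
/- Suppose the loss function ℓ is symmetric and obeys the triangle inequality, and suppose f_tr, f_te ∈ ℋ. Then for every hypothesis h ∈ ℋ one has ε_te(h) ≤ ε_tr(h) + M_cov + M_cpt^min, i.e. L_{D_te}(h, f_te) ≤ L_{D_tr}(h, f_tr) + disc(D_tr, D_te; ℋ, ℓ) + min{L_{D_tr}(f_tr, f_te), L_{D_te}(f_tr, f_te)}. -/
open MeasureTheory

/-- Expected loss `L_D(h₁, h₂) = ∫ ℓ(h₁ x, h₂ x) dD(x)`. -/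
noncomputable def expLoss {X Y' : Type*} [MeasurableSpace X] (ℓ : Y' → Y' → ℝ)
    (D : Measure X) (h₁ h₂ : X → Y') : ℝ :=
  ∫ x, ℓ (h₁ x) (h₂ x) ∂D

/-- Discrepancy distance `disc(D₁, D₂; ℋ, ℓ)`. -/
noncomputable def disc {X Y' : Type*} [MeasurableSpace X] (ℓ : Y' → Y' → ℝ)
    (H : Set (X → Y')) (D₁ D₂ : Measure X) : ℝ :=
  sSup {r | ∃ h₁ ∈ H, ∃ h₂ ∈ H, r = |expLoss ℓ D₁ h₁ h₂ - expLoss ℓ D₂ h₁ h₂|}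

/-- Theorem (upper generalization bound):
`ε_te(h) ≤ ε_tr(h) + M_cov + M_cpt^min` for all `h ∈ ℋ`. -/
theorem test_loss_upper_bound {X Y' : Type*} [MeasurableSpace X]
    (ℓ : Y' → Y' → ℝ)
    (hnonneg : ∀ a b, 0 ≤ ℓ a b)
    (hsymm : ∀ a b, ℓ a b = ℓ b a)
    (htri : ∀ a b c, ℓ a c ≤ ℓ a b + ℓ b c)
    (H : Set (X → Y')) (Dtr Dte : Measure X)
    [IsProbabilityMeasure Dtr] [IsProbabilityMeasure Dte]
    (ftr fte : X → Y') (hftr : ftr ∈ H) (hfte : fte ∈ H)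
    (hint : ∀ h₁ ∈ insert ftr (insert fte H), ∀ h₂ ∈ insert ftr (insert fte H),
      Integrable (fun x => ℓ (h₁ x) (h₂ x)) Dtr ∧
      Integrable (fun x => ℓ (h₁ x) (h₂ x)) Dte)
    (hbdd : BddAbove {r | ∃ h₁ ∈ H, ∃ h₂ ∈ H,
      r = |expLoss ℓ Dtr h₁ h₂ - expLoss ℓ Dte h₁ h₂|}) :
    ∀ h ∈ H,
      expLoss ℓ Dte h fte ≤
        expLoss ℓ Dtr h ftr + disc ℓ H Dtr Dte +
          min (expLoss ℓ Dtr ftr fte) (expLoss ℓ Dte ftr fte) := by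
  intro h hh
  have hh' : h ∈ insert ftr (insert fte H) :=
    Set.mem_insert_iff.2 (Or.inr (Set.mem_insert_iff.2 (Or.inr hh)))
  have hftr' : ftr ∈ insert ftr (insert fte H) := Set.mem_insert _ _
  have hfte' : fte ∈ insert ftr (insert fte H) :=
    Set.mem_insert_iff.2 (Or.inr (Set.mem_insert _ _))
  -- triangle inequality for expLoss
  have tri : ∀ D : Measure X, Integrable (fun x => ℓ (h x) (fte x)) D →
      Integrable (fun x => ℓ (h x) (ftr x)) D →
      Integrable (fun x => ℓ (ftr x) (fte x)) D →
      expLoss ℓ D h fte ≤ expLoss ℓ D h ftr + expLoss ℓ D ftr fte := by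
    intro D i0 i1 i2
    calc expLoss ℓ D h fte ≤ ∫ x, (ℓ (h x) (ftr x) + ℓ (ftr x) (fte x)) ∂D :=
          integral_mono i0 (i1.add i2) (fun x => htri _ _ _)
      _ = expLoss ℓ D h ftr + expLoss ℓ D ftr fte := integral_add i1 i2
  -- discrepancy bound
  have hdisc : ∀ h₁ ∈ H, ∀ h₂ ∈ H,
      expLoss ℓ Dte h₁ h₂ - expLoss ℓ Dtr h₁ h₂ ≤ disc ℓ H Dtr Dte := by
    intro h₁ h1 h₂ h2
    have := le_csSup hbdd ⟨h₁, h1, h₂, h2, rfl⟩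
    calc expLoss ℓ Dte h₁ h₂ - expLoss ℓ Dtr h₁ h₂
        ≤ |expLoss ℓ Dtr h₁ h₂ - expLoss ℓ Dte h₁ h₂| := by
          rw [abs_sub_comm]; exact le_abs_self _
      _ ≤ disc ℓ H Dtr Dte := this
  rcases le_total (expLoss ℓ Dtr ftr fte) (expLoss ℓ Dte ftr fte) with hm | hm
  · rw [min_eq_left hm]
    have h1 : expLoss ℓ Dte h fte ≤ expLoss ℓ Dtr h fte + disc ℓ H Dtr Dte := by
      have := hdisc h hh fte hfte
      linarith
    have h2 : expLoss ℓ Dtr h fte ≤ expLoss ℓ Dtr h ftr + expLoss ℓ Dtr ftr fte :=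
      tri Dtr (hint h hh' fte hfte').1 (hint h hh' ftr hftr').1 (hint ftr hftr' fte hfte').1
    linarith
  · rw [min_eq_right hm]
    have h1 : expLoss ℓ Dte h fte ≤ expLoss ℓ Dte h ftr + expLoss ℓ Dte ftr fte :=
      tri Dte (hint h hh' fte hfte').2 (hint h hh' ftr hftr').2 (hint ftr hftr' fte hfte').2
    have h2 : expLoss ℓ Dte h ftr ≤ expLoss ℓ Dtr h ftr + disc ℓ H Dtr Dte := by
      have := hdisc h hh ftr hftr
      linarith
    linarith
end

section
/- Suppose the loss function ℓ is symmetric and obeys the triangle inequality, and suppose f_te ∈ ℋ. Then for every hypothesis h ∈ ℋ one has ε_te(h) ≤ ε_tr(h) + disc(D_tr, D_te; ℋ, ℓ) + L_{D_tr}(f_tr, f_te). -/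
open MeasureTheory

/-- `ε_te(h) ≤ ε_tr(h) + disc(D_tr, D_te; ℋ, ℓ) + L_{D_tr}(f_tr, f_te)` when `f_te ∈ ℋ`. -/
theorem test_loss_upper_bound_tr {X Y' : Type*} [MeasurableSpace X]
    (ℓ : Y' → Y' → ℝ)
    (hnonneg : ∀ a b, 0 ≤ ℓ a b)
    (hsymm : ∀ a b, ℓ a b = ℓ b a)
    (htri : ∀ a b c, ℓ a c ≤ ℓ a b + ℓ b c)
    (H : Set (X → Y')) (Dtr Dte : Measure X)
    [IsProbabilityMeasure Dtr] [IsProbabilityMeasure Dte]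
    (ftr fte : X → Y') (hfte : fte ∈ H)
    (hint : ∀ h₁ ∈ insert ftr (insert fte H), ∀ h₂ ∈ insert ftr (insert fte H),
      Integrable (fun x => ℓ (h₁ x) (h₂ x)) Dtr ∧
      Integrable (fun x => ℓ (h₁ x) (h₂ x)) Dte)
    (hbdd : BddAbove {r | ∃ h₁ ∈ H, ∃ h₂ ∈ H,
      r = |expLoss ℓ Dtr h₁ h₂ - expLoss ℓ Dte h₁ h₂|}) :
    ∀ h ∈ H,
      expLoss ℓ Dte h fte ≤
        expLoss ℓ Dtr h ftr + disc ℓ H Dtr Dte + expLoss ℓ Dtr ftr fte := by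
  intro h hh
  have hmem : ∀ g ∈ H, g ∈ insert ftr (insert fte H) := fun g hg =>
    Set.mem_insert_of_mem _ (Set.mem_insert_of_mem _ hg)
  have hI_hfte := hint h (hmem h hh) fte (hmem fte hfte)
  have hI_hftr := (hint h (hmem h hh) ftr (Set.mem_insert _ _)).1
  have hI_trte := (hint ftr (Set.mem_insert _ _) fte (hmem fte hfte)).1
  -- step 1: L_Dte(h,fte) - L_Dtr(h,fte) ≤ disc
  have h1 : expLoss ℓ Dte h fte - expLoss ℓ Dtr h fte ≤ disc ℓ H Dtr Dte := by
    have hmemset : |expLoss ℓ Dtr h fte - expLoss ℓ Dte h fte| ∈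
        {r | ∃ h₁ ∈ H, ∃ h₂ ∈ H, r = |expLoss ℓ Dtr h₁ h₂ - expLoss ℓ Dte h₁ h₂|} :=
      ⟨h, hh, fte, hfte, rfl⟩
    have := le_csSup hbdd hmemset
    calc expLoss ℓ Dte h fte - expLoss ℓ Dtr h fte
        ≤ |expLoss ℓ Dtr h fte - expLoss ℓ Dte h fte| := by
          rw [abs_sub_comm]; exact le_abs_self _
      _ ≤ disc ℓ H Dtr Dte := this
  -- step 2: L_Dtr(h,fte) ≤ L_Dtr(h,ftr) + L_Dtr(ftr,fte)
  have h2 : expLoss ℓ Dtr h fte ≤ expLoss ℓ Dtr h ftr + expLoss ℓ Dtr ftr fte := by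
    have : expLoss ℓ Dtr h fte ≤ ∫ x, (ℓ (h x) (ftr x) + ℓ (ftr x) (fte x)) ∂Dtr :=
      integral_mono hI_hfte.1 (hI_hftr.add hI_trte) (fun x => htri _ _ _)
    rwa [integral_add hI_hftr hI_trte] at this
  linarith
end

section
/- Suppose the loss function ℓ is symmetric and obeys the triangle inequality, and suppose f_tr ∈ ℋ. Then for every hypothesis h ∈ ℋ one has ε_te(h) ≤ ε_tr(h) + disc(D_tr, D_te; ℋ, ℓ) + L_{D_te}(f_tr, f_te). -/
open MeasureTheory

/-- `ε_te(h) ≤ ε_tr(h) + disc(D_tr, D_te; ℋ, ℓ) + L_{D_te}(f_tr, f_te)` when `f_tr ∈ ℋ`. -/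
theorem test_loss_upper_bound_te {X Y' : Type*} [MeasurableSpace X]
    (ℓ : Y' → Y' → ℝ)
    (hnonneg : ∀ a b, 0 ≤ ℓ a b)
    (hsymm : ∀ a b, ℓ a b = ℓ b a)
    (htri : ∀ a b c, ℓ a c ≤ ℓ a b + ℓ b c)
    (H : Set (X → Y')) (Dtr Dte : Measure X)
    [IsProbabilityMeasure Dtr] [IsProbabilityMeasure Dte]
    (ftr fte : X → Y') (hftr : ftr ∈ H)
    (hint : ∀ h₁ ∈ insert ftr (insert fte H), ∀ h₂ ∈ insert ftr (insert fte H),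
      Integrable (fun x => ℓ (h₁ x) (h₂ x)) Dtr ∧
      Integrable (fun x => ℓ (h₁ x) (h₂ x)) Dte)
    (hbdd : BddAbove {r | ∃ h₁ ∈ H, ∃ h₂ ∈ H,
      r = |expLoss ℓ Dtr h₁ h₂ - expLoss ℓ Dte h₁ h₂|}) :
    ∀ h ∈ H,
      expLoss ℓ Dte h fte ≤
        expLoss ℓ Dtr h ftr + disc ℓ H Dtr Dte + expLoss ℓ Dte ftr fte := by
  intro h hh
  have hhmem : h ∈ insert ftr (insert fte H) := by simp [hh]
  have hftrmem : ftr ∈ insert ftr (insert fte H) := by simp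
  have hftemem : fte ∈ insert ftr (insert fte H) := by simp
  -- step 1: L_Dte(h, fte) ≤ L_Dte(h, ftr) + L_Dte(ftr, fte)
  have step1 : expLoss ℓ Dte h fte ≤ expLoss ℓ Dte h ftr + expLoss ℓ Dte ftr fte := by
    have := integral_add ((hint h hhmem ftr hftrmem).2) ((hint ftr hftrmem fte hftemem).2)
    calc expLoss ℓ Dte h fte
        ≤ ∫ x, (ℓ (h x) (ftr x) + ℓ (ftr x) (fte x)) ∂Dte := by
          apply integral_mono ((hint h hhmem fte hftemem).2)
            (((hint h hhmem ftr hftrmem).2).add ((hint ftr hftrmem fte hftemem).2))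
          intro x; exact htri _ _ _
      _ = expLoss ℓ Dte h ftr + expLoss ℓ Dte ftr fte := this
  -- step 2: L_Dte(h, ftr) ≤ L_Dtr(h, ftr) + disc
  have step2 : expLoss ℓ Dte h ftr ≤ expLoss ℓ Dtr h ftr + disc ℓ H Dtr Dte := by
    have hmem : |expLoss ℓ Dtr h ftr - expLoss ℓ Dte h ftr| ∈
        {r | ∃ h₁ ∈ H, ∃ h₂ ∈ H, r = |expLoss ℓ Dtr h₁ h₂ - expLoss ℓ Dte h₁ h₂|} :=
      ⟨h, hh, ftr, hftr, rfl⟩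
    have hle : |expLoss ℓ Dtr h ftr - expLoss ℓ Dte h ftr| ≤ disc ℓ H Dtr Dte :=
      le_csSup hbdd hmem
    have := neg_abs_le (expLoss ℓ Dtr h ftr - expLoss ℓ Dte h ftr)
    linarith
  linarith
end

section
/- Suppose the loss function ℓ is symmetric and obeys the triangle inequality, and suppose f_tr, f_te ∈ ℋ. Then for every hypothesis h ∈ ℋ one has ε_te(h) ≥ M_cpt^max − M_cov − ε_tr(h), i.e. L_{D_te}(h, f_te) ≥ max{L_{D_tr}(f_tr, f_te), L_{D_te}(f_tr, f_te)} − disc(D_tr, D_te; ℋ, ℓ) − L_{D_tr}(h, f_tr). -/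
open MeasureTheory

/-- Theorem (lower generalization bound):
`ε_te(h) ≥ M_cpt^max − M_cov − ε_tr(h)` for all `h ∈ ℋ`. -/
theorem test_loss_lower_bound {X Y' : Type*} [MeasurableSpace X]
    (ℓ : Y' → Y' → ℝ)
    (hnonneg : ∀ a b, 0 ≤ ℓ a b)
    (hsymm : ∀ a b, ℓ a b = ℓ b a)
    (htri : ∀ a b c, ℓ a c ≤ ℓ a b + ℓ b c)
    (H : Set (X → Y')) (Dtr Dte : Measure X)
    [IsProbabilityMeasure Dtr] [IsProbabilityMeasure Dte]
    (ftr fte : X → Y') (hftr : ftr ∈ H) (hfte : fte ∈ H)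
    (hint : ∀ h₁ ∈ insert ftr (insert fte H), ∀ h₂ ∈ insert ftr (insert fte H),
      Integrable (fun x => ℓ (h₁ x) (h₂ x)) Dtr ∧
      Integrable (fun x => ℓ (h₁ x) (h₂ x)) Dte)
    (hbdd : BddAbove {r | ∃ h₁ ∈ H, ∃ h₂ ∈ H,
      r = |expLoss ℓ Dtr h₁ h₂ - expLoss ℓ Dte h₁ h₂|}) :
    ∀ h ∈ H,
      max (expLoss ℓ Dtr ftr fte) (expLoss ℓ Dte ftr fte)
          - disc ℓ H Dtr Dte - expLoss ℓ Dtr h ftr ≤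
        expLoss ℓ Dte h fte := by
  intro h hh
  have hhS : h ∈ insert ftr (insert fte H) := Or.inr (Or.inr hh)
  have hftrS : ftr ∈ insert ftr (insert fte H) := Or.inl rfl
  have hfteS : fte ∈ insert ftr (insert fte H) := Or.inr (Or.inl rfl)
  have tri : ∀ (D : Measure X), Integrable (fun x => ℓ (ftr x) (fte x)) D →
      Integrable (fun x => ℓ (h x) (ftr x)) D → Integrable (fun x => ℓ (h x) (fte x)) D →
      expLoss ℓ D ftr fte ≤ expLoss ℓ D h ftr + expLoss ℓ D h fte := by
    intro D i1 i2 i3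
    have h1 : expLoss ℓ D ftr fte ≤ ∫ x, (ℓ (h x) (ftr x) + ℓ (h x) (fte x)) ∂D := by
      apply integral_mono i1 (i2.add i3)
      intro x
      calc ℓ (ftr x) (fte x) ≤ ℓ (ftr x) (h x) + ℓ (h x) (fte x) := htri _ _ _
        _ = ℓ (h x) (ftr x) + ℓ (h x) (fte x) := by rw [hsymm (ftr x) (h x)]
    simpa [expLoss, integral_add i2 i3] using h1
  have discge : ∀ a ∈ H, ∀ b ∈ H,
      |expLoss ℓ Dtr a b - expLoss ℓ Dte a b| ≤ disc ℓ H Dtr Dte :=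
    fun a ha b hb => le_csSup hbdd ⟨a, ha, b, hb, rfl⟩
  have d1 : expLoss ℓ Dte h ftr ≤ expLoss ℓ Dtr h ftr + disc ℓ H Dtr Dte := by
    have := abs_le.mp (discge h hh ftr hftr); linarith [this.1]
  have d2 : expLoss ℓ Dtr h fte ≤ expLoss ℓ Dte h fte + disc ℓ H Dtr Dte := by
    have := abs_le.mp (discge h hh fte hfte); linarith [this.2]
  have t1 := tri Dte (hint ftr hftrS fte hfteS).2 (hint h hhS ftr hftrS).2 (hint h hhS fte hfteS).2
  have t2 := tri Dtr (hint ftr hftrS fte hfteS).1 (hint h hhS ftr hftrS).1 (hint h hhS fte hfteS).1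
  have hmax : max (expLoss ℓ Dtr ftr fte) (expLoss ℓ Dte ftr fte)
      ≤ disc ℓ H Dtr Dte + expLoss ℓ Dtr h ftr + expLoss ℓ Dte h fte := by
    apply max_le <;> linarith
  linarith
end

section
/- Suppose the loss function ℓ is symmetric and obeys the triangle inequality, and suppose f_te ∈ ℋ. Then for every hypothesis h ∈ ℋ one has ε_te(h) ≥ L_{D_tr}(f_tr, f_te) − disc(D_tr, D_te; ℋ, ℓ) − ε_tr(h). -/
open MeasureTheory

/-- `ε_te(h) ≥ L_{D_tr}(f_tr, f_te) − disc(D_tr, D_te; ℋ, ℓ) − ε_tr(h)` when `f_te ∈ ℋ`. -/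
theorem test_loss_lower_bound_tr {X Y' : Type*} [MeasurableSpace X]
    (ℓ : Y' → Y' → ℝ)
    (hnonneg : ∀ a b, 0 ≤ ℓ a b)
    (hsymm : ∀ a b, ℓ a b = ℓ b a)
    (htri : ∀ a b c, ℓ a c ≤ ℓ a b + ℓ b c)
    (H : Set (X → Y')) (Dtr Dte : Measure X)
    [IsProbabilityMeasure Dtr] [IsProbabilityMeasure Dte]
    (ftr fte : X → Y') (hfte : fte ∈ H)
    (hint : ∀ h₁ ∈ insert ftr (insert fte H), ∀ h₂ ∈ insert ftr (insert fte H),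
      Integrable (fun x => ℓ (h₁ x) (h₂ x)) Dtr ∧
      Integrable (fun x => ℓ (h₁ x) (h₂ x)) Dte)
    (hbdd : BddAbove {r | ∃ h₁ ∈ H, ∃ h₂ ∈ H,
      r = |expLoss ℓ Dtr h₁ h₂ - expLoss ℓ Dte h₁ h₂|}) :
    ∀ h ∈ H,
      expLoss ℓ Dtr ftr fte - disc ℓ H Dtr Dte - expLoss ℓ Dtr h ftr ≤
        expLoss ℓ Dte h fte := by
  intro h hh
  have hmemH : h ∈ insert ftr (insert fte H) := by simp [hh]
  have hmemf : fte ∈ insert ftr (insert fte H) := by simp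
  have hmemtr : ftr ∈ insert ftr (insert fte H) := by simp
  -- triangle: L_tr(ftr,fte) ≤ L_tr(ftr,h) + L_tr(h,fte)
  have h1 : expLoss ℓ Dtr ftr fte ≤ expLoss ℓ Dtr ftr h + expLoss ℓ Dtr h fte := by
    have := MeasureTheory.integral_add (hint ftr hmemtr h hmemH).1 (hint h hmemH fte hmemf).1
    unfold expLoss
    rw [← this]
    exact MeasureTheory.integral_mono (hint ftr hmemtr fte hmemf).1
      (((hint ftr hmemtr h hmemH).1).add (hint h hmemH fte hmemf).1)
      (fun x => htri _ _ _)
  have hsymmL : expLoss ℓ Dtr ftr h = expLoss ℓ Dtr h ftr := by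
    unfold expLoss; simp_rw [hsymm]
  -- disc bound
  have h2 : expLoss ℓ Dtr h fte - expLoss ℓ Dte h fte ≤ disc ℓ H Dtr Dte := by
    have hle : |expLoss ℓ Dtr h fte - expLoss ℓ Dte h fte| ≤ disc ℓ H Dtr Dte :=
      le_csSup hbdd ⟨h, hh, fte, hfte, rfl⟩
    exact (le_abs_self _).trans hle
  linarith
end

section
/- Suppose the loss function ℓ is symmetric and obeys the triangle inequality, and suppose f_tr ∈ ℋ. Then for every hypothesis h ∈ ℋ one has ε_te(h) ≥ L_{D_te}(f_tr, f_te) − disc(D_tr, D_te; ℋ, ℓ) − ε_tr(h). -/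
open MeasureTheory

/-- `ε_te(h) ≥ L_{D_te}(f_tr, f_te) − disc(D_tr, D_te; ℋ, ℓ) − ε_tr(h)` when `f_tr ∈ ℋ`. -/
theorem test_loss_lower_bound_te {X Y' : Type*} [MeasurableSpace X]
    (ℓ : Y' → Y' → ℝ)
    (hnonneg : ∀ a b, 0 ≤ ℓ a b)
    (hsymm : ∀ a b, ℓ a b = ℓ b a)
    (htri : ∀ a b c, ℓ a c ≤ ℓ a b + ℓ b c)
    (H : Set (X → Y')) (Dtr Dte : Measure X)
    [IsProbabilityMeasure Dtr] [IsProbabilityMeasure Dte]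
    (ftr fte : X → Y') (hftr : ftr ∈ H)
    (hint : ∀ h₁ ∈ insert ftr (insert fte H), ∀ h₂ ∈ insert ftr (insert fte H),
      Integrable (fun x => ℓ (h₁ x) (h₂ x)) Dtr ∧
      Integrable (fun x => ℓ (h₁ x) (h₂ x)) Dte)
    (hbdd : BddAbove {r | ∃ h₁ ∈ H, ∃ h₂ ∈ H,
      r = |expLoss ℓ Dtr h₁ h₂ - expLoss ℓ Dte h₁ h₂|}) :
    ∀ h ∈ H,
      expLoss ℓ Dte ftr fte - disc ℓ H Dtr Dte - expLoss ℓ Dtr h ftr ≤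
        expLoss ℓ Dte h fte := by
  intro h hh
  have hhmem : h ∈ insert ftr (insert fte H) := by simp [hh]
  have hftrmem : ftr ∈ insert ftr (insert fte H) := by simp
  have hftemem : fte ∈ insert ftr (insert fte H) := by simp
  -- triangle: L_te(ftr,fte) ≤ L_te(ftr,h) + L_te(h,fte)
  have htri' : expLoss ℓ Dte ftr fte ≤ expLoss ℓ Dte ftr h + expLoss ℓ Dte h fte := by
    have i1 := (hint ftr hftrmem h hhmem).2
    have i2 := (hint h hhmem fte hftemem).2
    calc expLoss ℓ Dte ftr fte
        ≤ ∫ x, (ℓ (ftr x) (h x) + ℓ (h x) (fte x)) ∂Dte := by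
          apply integral_mono (hint ftr hftrmem fte hftemem).2 (i1.add i2)
          intro x; exact htri _ _ _
      _ = expLoss ℓ Dte ftr h + expLoss ℓ Dte h fte := integral_add i1 i2
  -- disc bound: L_te(ftr,h) ≤ L_tr(ftr,h) + disc
  have hdisc : expLoss ℓ Dte h ftr - expLoss ℓ Dtr h ftr ≤ disc ℓ H Dtr Dte := by
    have hmem : |expLoss ℓ Dtr h ftr - expLoss ℓ Dte h ftr| ∈
        {r | ∃ h₁ ∈ H, ∃ h₂ ∈ H, r = |expLoss ℓ Dtr h₁ h₂ - expLoss ℓ Dte h₁ h₂|} :=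
      ⟨h, hh, ftr, hftr, rfl⟩
    have := le_csSup hbdd hmem
    have habs : expLoss ℓ Dte h ftr - expLoss ℓ Dtr h ftr ≤
        |expLoss ℓ Dtr h ftr - expLoss ℓ Dte h ftr| := by
      rw [abs_sub_comm]; exact le_abs_self _
    exact habs.trans this
  have hsymm1 : expLoss ℓ Dte ftr h = expLoss ℓ Dte h ftr := by
    unfold expLoss; simp only [hsymm]
  linarith
end

section
/- Suppose ℓ takes values in [0, M], there exist a, b ∈ Y' with ℓ(a, b) = M and there exist c, d ∈ Y' with ℓ(c, d) = 0, and let ℋ be the set of all measurable functions from X to Y'. Suppose D_tr and D_te have densities p_tr and p_te with respect to a σ-finite measure μ on X. Then disc(D_tr, D_te; ℋ, ℓ) = (M/2) · ∫_X |p_tr(x) − p_te(x)| dμ(x). -/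
open MeasureTheory

/-- If `ℓ` takes values in `[0, M]`, attains both `M` and `0`, and `ℋ` is the class of
all measurable functions, then `disc(D_tr, D_te; ℋ, ℓ) = (M/2) ∫ |p_tr − p_te| dμ`. -/
theorem disc_eq_half_l1_dist {X Y' : Type*} [MeasurableSpace X] [MeasurableSpace Y']
    (ℓ : Y' → Y' → ℝ) (M : ℝ)
    (hmeas : Measurable fun p : Y' × Y' => ℓ p.1 p.2)
    (hnonneg : ∀ a b, 0 ≤ ℓ a b) (hbound : ∀ a b, ℓ a b ≤ M)
    (hattainM : ∃ a b, ℓ a b = M) (hattain0 : ∃ c d, ℓ c d = 0)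
    (μ : Measure X) [SigmaFinite μ]
    (ptr pte : X → ℝ) (hptr : Measurable ptr) (hpte : Measurable pte)
    (hptr0 : ∀ x, 0 ≤ ptr x) (hpte0 : ∀ x, 0 ≤ pte x)
    (Dtr Dte : Measure X) [IsProbabilityMeasure Dtr] [IsProbabilityMeasure Dte]
    (hDtr : Dtr = μ.withDensity fun x => ENNReal.ofReal (ptr x))
    (hDte : Dte = μ.withDensity fun x => ENNReal.ofReal (pte x)) :
    disc ℓ {h : X → Y' | Measurable h} Dtr Dte = M / 2 * ∫ x, |ptr x - pte x| ∂μ := by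
  obtain ⟨a, b, hab⟩ := hattainM
  obtain ⟨c, d, hcd⟩ := hattain0
  have hM0 : 0 ≤ M := hab ▸ hnonneg a b
  -- integrability of the densities
  have hlin : ∀ (p : X → ℝ), Measurable p → (∀ x, 0 ≤ p x) →
      IsProbabilityMeasure (μ.withDensity fun x => ENNReal.ofReal (p x)) →
      Integrable p μ := by
    intro p hp hp0 hprob
    refine ⟨hp.aestronglyMeasurable, ?_⟩
    rw [hasFiniteIntegral_iff_ofReal (Filter.Eventually.of_forall hp0)]
    have : ∫⁻ x, ENNReal.ofReal (p x) ∂μ =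
        (μ.withDensity fun x => ENNReal.ofReal (p x)) Set.univ := by
      rw [withDensity_apply _ MeasurableSet.univ, Measure.restrict_univ]
    rw [this, hprob.measure_univ]
    exact ENNReal.one_lt_top
  have hint_ptr : Integrable ptr μ := hlin ptr hptr hptr0 (hDtr ▸ ‹IsProbabilityMeasure Dtr›)
  have hint_pte : Integrable pte μ := hlin pte hpte hpte0 (hDte ▸ ‹IsProbabilityMeasure Dte›)
  -- the densities integrate to 1
  have hone : ∀ (p : X → ℝ), Measurable p → (∀ x, 0 ≤ p x) →
      IsProbabilityMeasure (μ.withDensity fun x => ENNReal.ofReal (p x)) →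
      ∫ x, p x ∂μ = 1 := by
    intro p hp hp0 hprob
    rw [integral_eq_lintegral_of_nonneg_ae (Filter.Eventually.of_forall hp0)
      hp.aestronglyMeasurable]
    have : ∫⁻ x, ENNReal.ofReal (p x) ∂μ =
        (μ.withDensity fun x => ENNReal.ofReal (p x)) Set.univ := by
      rw [withDensity_apply _ MeasurableSet.univ, Measure.restrict_univ]
    rw [this, hprob.measure_univ]; simp
  have hone_tr : ∫ x, ptr x ∂μ = 1 := hone ptr hptr hptr0 (hDtr ▸ ‹IsProbabilityMeasure Dtr›)
  have hone_te : ∫ x, pte x ∂μ = 1 := hone pte hpte hpte0 (hDte ▸ ‹IsProbabilityMeasure Dte›)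
  -- g and its parts
  set g : X → ℝ := fun x => ptr x - pte x with hg_def
  have hg : Measurable g := hptr.sub hpte
  have hint_g : Integrable g μ := hint_ptr.sub hint_pte
  have hint_gp : Integrable (fun x => max (g x) 0) μ := hint_g.pos_part
  have hint_gn : Integrable (fun x => max (-g x) 0) μ := hint_g.neg.pos_part
  have hIg : ∫ x, g x ∂μ = 0 := by
    rw [integral_sub hint_ptr hint_pte, hone_tr, hone_te]; ring
  set I : ℝ := ∫ x, |ptr x - pte x| ∂μ with hI_def
  have hPN0 : (∫ x, max (g x) 0 ∂μ) - (∫ x, max (-g x) 0 ∂μ) = 0 := by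
    rw [← integral_sub hint_gp hint_gn]
    have he : (fun x => max (g x) 0 - max (-g x) 0) = g := by
      funext x; exact max_zero_sub_eq_self (g x)
    rw [he, hIg]
  have hPNI : (∫ x, max (g x) 0 ∂μ) + (∫ x, max (-g x) 0 ∂μ) = I := by
    rw [← integral_add hint_gp hint_gn, hI_def]
    congr 1; funext x; exact max_zero_add_max_neg_zero_eq_abs_self (g x)
  have hP : ∫ x, max (g x) 0 ∂μ = I / 2 := by linarith
  have hN : ∫ x, max (-g x) 0 ∂μ = I / 2 := by linarith
  have hI0 : 0 ≤ I := by
    have := integral_nonneg (μ := μ) (f := fun x => max (g x) 0) (fun x => le_max_right _ _)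
    linarith
  -- key bound on ∫ f·g for f measurable with values in [0, M]
  have hub : ∀ f : X → ℝ, Measurable f → (∀ x, 0 ≤ f x) → (∀ x, f x ≤ M) →
      |∫ x, f x * g x ∂μ| ≤ M / 2 * I := by
    intro f hf hf0 hfM
    have hintp : Integrable (fun x => f x * max (g x) 0) μ := by
      refine Integrable.mono' (hint_gp.const_mul M) ((hf.mul (hg.max measurable_const)).aestronglyMeasurable) ?_
      refine Filter.Eventually.of_forall fun x => ?_
      rw [Real.norm_eq_abs, abs_mul, abs_of_nonneg (hf0 x), abs_of_nonneg (le_max_right _ _)]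
      exact mul_le_mul_of_nonneg_right (hfM x) (le_max_right _ _)
    have hintn : Integrable (fun x => f x * max (-g x) 0) μ := by
      refine Integrable.mono' (hint_gn.const_mul M) ((hf.mul ((hg.neg).max measurable_const)).aestronglyMeasurable) ?_
      refine Filter.Eventually.of_forall fun x => ?_
      rw [Real.norm_eq_abs, abs_mul, abs_of_nonneg (hf0 x), abs_of_nonneg (le_max_right _ _)]
      exact mul_le_mul_of_nonneg_right (hfM x) (le_max_right _ _)
    have hsplit : ∫ x, f x * g x ∂μ =
        (∫ x, f x * max (g x) 0 ∂μ) - (∫ x, f x * max (-g x) 0 ∂μ) := by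
      rw [← integral_sub hintp hintn]
      congr 1; funext x
      rw [← mul_sub, max_zero_sub_eq_self]
    have hp1 : 0 ≤ ∫ x, f x * max (g x) 0 ∂μ :=
      integral_nonneg fun x => mul_nonneg (hf0 x) (le_max_right _ _)
    have hp2 : ∫ x, f x * max (g x) 0 ∂μ ≤ M * (I / 2) := by
      rw [← hP, ← integral_const_mul]
      exact integral_mono hintp (hint_gp.const_mul M)
        (fun x => mul_le_mul_of_nonneg_right (hfM x) (le_max_right _ _))
    have hn1 : 0 ≤ ∫ x, f x * max (-g x) 0 ∂μ :=
      integral_nonneg fun x => mul_nonneg (hf0 x) (le_max_right _ _)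
    have hn2 : ∫ x, f x * max (-g x) 0 ∂μ ≤ M * (I / 2) := by
      rw [← hN, ← integral_const_mul]
      exact integral_mono hintn (hint_gn.const_mul M)
        (fun x => mul_le_mul_of_nonneg_right (hfM x) (le_max_right _ _))
    rw [hsplit, abs_le]; constructor <;> linarith
  -- expLoss formula
  have hExp : ∀ (p : X → ℝ), Measurable p → (∀ x, 0 ≤ p x) → ∀ h₁ h₂ : X → Y',
      expLoss ℓ (μ.withDensity fun x => ENNReal.ofReal (p x)) h₁ h₂ =
        ∫ x, ℓ (h₁ x) (h₂ x) * p x ∂μ := by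
    intro p hp hp0 h₁ h₂
    have h1 : (fun x => ENNReal.ofReal (p x)) = fun x => ((Real.toNNReal (p x) : NNReal) : ENNReal) := rfl
    rw [expLoss, h1, integral_withDensity_eq_integral_smul (hp.real_toNNReal)]
    congr 1; funext x
    rw [NNReal.smul_def, smul_eq_mul, Real.coe_toNNReal _ (hp0 x), mul_comm]
  -- difference formula
  have hdiff : ∀ h₁ h₂ : X → Y', Measurable h₁ → Measurable h₂ →
      expLoss ℓ Dtr h₁ h₂ - expLoss ℓ Dte h₁ h₂ = ∫ x, ℓ (h₁ x) (h₂ x) * g x ∂μ := by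
    intro h₁ h₂ hh₁ hh₂
    have hfmeas : Measurable fun x => ℓ (h₁ x) (h₂ x) := hmeas.comp (hh₁.prodMk hh₂)
    have hi1 : Integrable (fun x => ℓ (h₁ x) (h₂ x) * ptr x) μ := by
      refine Integrable.mono' (hint_ptr.const_mul M) ((hfmeas.mul hptr).aestronglyMeasurable) ?_
      refine Filter.Eventually.of_forall fun x => ?_
      rw [Real.norm_eq_abs, abs_mul, abs_of_nonneg (hnonneg _ _), abs_of_nonneg (hptr0 x)]
      exact mul_le_mul_of_nonneg_right (hbound _ _) (hptr0 x)
    have hi2 : Integrable (fun x => ℓ (h₁ x) (h₂ x) * pte x) μ := by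
      refine Integrable.mono' (hint_pte.const_mul M) ((hfmeas.mul hpte).aestronglyMeasurable) ?_
      refine Filter.Eventually.of_forall fun x => ?_
      rw [Real.norm_eq_abs, abs_mul, abs_of_nonneg (hnonneg _ _), abs_of_nonneg (hpte0 x)]
      exact mul_le_mul_of_nonneg_right (hbound _ _) (hpte0 x)
    rw [hDtr, hDte, hExp ptr hptr hptr0, hExp pte hpte hpte0, ← integral_sub hi1 hi2]
    congr 1; funext x; rw [hg_def]; ring
  -- the maximizing pair
  set A : Set X := {x | 0 < g x} with hA_def
  have hA : MeasurableSet A := measurableSet_lt measurable_const hg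
  set h₁ : X → Y' := A.piecewise (fun _ => a) (fun _ => c) with hh₁_def
  set h₂ : X → Y' := A.piecewise (fun _ => b) (fun _ => d) with hh₂_def
  have hh₁ : Measurable h₁ := Measurable.piecewise hA measurable_const measurable_const
  have hh₂ : Measurable h₂ := Measurable.piecewise hA measurable_const measurable_const
  have hval : ∀ x, ℓ (h₁ x) (h₂ x) * g x = M * max (g x) 0 := by
    intro x
    by_cases hx : x ∈ A
    · rw [hh₁_def, hh₂_def, Set.piecewise_eq_of_mem _ _ _ hx, Set.piecewise_eq_of_mem _ _ _ hx,
        hab, max_eq_left (le_of_lt hx)]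
    · rw [hh₁_def, hh₂_def, Set.piecewise_eq_of_notMem _ _ _ hx,
        Set.piecewise_eq_of_notMem _ _ _ hx, hcd, max_eq_right (not_lt.mp hx)]
      ring
  have hattain : expLoss ℓ Dtr h₁ h₂ - expLoss ℓ Dte h₁ h₂ = M / 2 * I := by
    rw [hdiff h₁ h₂ hh₁ hh₂]
    calc ∫ x, ℓ (h₁ x) (h₂ x) * g x ∂μ = ∫ x, M * max (g x) 0 ∂μ := by
          congr 1; funext x; exact hval x
      _ = M * (I / 2) := by rw [integral_const_mul, hP]
      _ = M / 2 * I := by ring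
  -- conclude via sSup
  have hGreatest : IsGreatest
      {r | ∃ h₁' ∈ {h : X → Y' | Measurable h}, ∃ h₂' ∈ {h : X → Y' | Measurable h},
        r = |expLoss ℓ Dtr h₁' h₂' - expLoss ℓ Dte h₁' h₂'|} (M / 2 * I) := by
    constructor
    · exact ⟨h₁, hh₁, h₂, hh₂, by
        rw [hattain, abs_of_nonneg (by positivity)]⟩
    · rintro r ⟨h₁', hh₁', h₂', hh₂', rfl⟩
      rw [hdiff h₁' h₂' hh₁' hh₂']
      exact hub _ (hmeas.comp (hh₁'.prodMk hh₂')) (fun x => hnonneg _ _) (fun x => hbound _ _)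
  rw [disc]
  exact hGreatest.csSup_eq
end

section
/- Suppose ℓ takes values in [0, M], there exist a, b ∈ Y' with ℓ(a, b) = M and there exist c, d ∈ Y' with ℓ(c, d) = 0, and let ℋ be the set of all measurable functions from X to Y'. Suppose D₁ and D₂ are probability measures on X with densities p₁ and p₂ with respect to a σ-finite measure μ. Then the one-sided supremum satisfies sup_{h₁, h₂ ∈ ℋ} ( L_{D₁}(h₁, h₂) − L_{D₂}(h₁, h₂) ) = M · ∫_X max{p₁(x) − p₂(x), 0} dμ(x). -/
/-!
Against `μ`, the difference of the two expected losses is `∫ (p₁ - p₂) · ℓ(h₁, h₂) dμ`. Since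
`0 ≤ ℓ ≤ M`, the integrand is at most `M · max (p₁ - p₂) 0`, and equality holds for the pair of
hypotheses that realises `ℓ = M` where `p₁ > p₂` and `ℓ = 0` elsewhere.
-/

open MeasureTheory

section Densities

variable {X : Type*} [MeasurableSpace X] {μ : Measure X} {p p₁ p₂ : X → ℝ}

theorem integral_withDensity_ofReal (hp : Measurable p) (hp0 : ∀ x, 0 ≤ p x) (g : X → ℝ) :
    ∫ x, g x ∂μ.withDensity (fun x => ENNReal.ofReal (p x)) = ∫ x, p x * g x ∂μ := by
  rw [integral_withDensity_eq_integral_toReal_smul hp.ennreal_ofReal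
    (.of_forall fun _ => ENNReal.ofReal_lt_top) g]
  simp only [ENNReal.toReal_ofReal (hp0 _), smul_eq_mul]

theorem integrable_of_isProbabilityMeasure_withDensity_ofReal (hp : Measurable p)
    (hp0 : ∀ x, 0 ≤ p x) [IsProbabilityMeasure (μ.withDensity fun x => ENNReal.ofReal (p x))] :
    Integrable p μ := by
  have hlintegral : ∫⁻ x, ENNReal.ofReal (p x) ∂μ = 1 := by
    rw [← setLIntegral_univ, ← withDensity_apply _ MeasurableSet.univ, measure_univ]
  have := integrable_toReal_of_lintegral_ne_top hp.ennreal_ofReal.aemeasurable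
    (hlintegral ▸ ENNReal.one_ne_top)
  simpa only [ENNReal.toReal_ofReal (hp0 _)] using this

theorem integral_withDensity_sub_integral_withDensity (hp₁ : Measurable p₁) (hp₂ : Measurable p₂)
    (hp₁0 : ∀ x, 0 ≤ p₁ x) (hp₂0 : ∀ x, 0 ≤ p₂ x) (hi₁ : Integrable p₁ μ) (hi₂ : Integrable p₂ μ)
    {f : X → ℝ} (hf : AEStronglyMeasurable f μ) {C : ℝ} (hC : ∀ x, ‖f x‖ ≤ C) :
    ∫ x, f x ∂μ.withDensity (fun x => ENNReal.ofReal (p₁ x)) -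
        ∫ x, f x ∂μ.withDensity (fun x => ENNReal.ofReal (p₂ x)) =
      ∫ x, (p₁ x - p₂ x) * f x ∂μ := by
  rw [integral_withDensity_ofReal hp₁ hp₁0, integral_withDensity_ofReal hp₂ hp₂0,
    ← integral_sub (hi₁.mul_bdd hf (.of_forall hC)) (hi₂.mul_bdd hf (.of_forall hC))]
  simp only [sub_mul]

end Densities

section PositivePart

variable {X : Type*} [MeasurableSpace X] {μ : Measure X} {g f : X → ℝ} {M : ℝ}

theorem mul_le_mul_max_zero {t y : ℝ} (hy0 : 0 ≤ y) (hyM : y ≤ M) : t * y ≤ M * max t 0 := by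
  rcases le_total 0 t with ht | ht
  · rw [max_eq_left ht, mul_comm M]
    exact mul_le_mul_of_nonneg_left hyM ht
  · rw [max_eq_right ht, mul_zero]
    exact mul_nonpos_of_nonpos_of_nonneg ht hy0

theorem integral_mul_le_mul_integral_max_zero (hg : Integrable g μ) (hf : AEStronglyMeasurable f μ)
    (hf0 : ∀ x, 0 ≤ f x) (hfM : ∀ x, f x ≤ M) :
    ∫ x, g x * f x ∂μ ≤ M * ∫ x, max (g x) 0 ∂μ := by
  have hfC : ∀ x, ‖f x‖ ≤ M := fun x => by rw [Real.norm_of_nonneg (hf0 x)]; exact hfM x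
  rw [← integral_const_mul]
  exact integral_mono (hg.mul_bdd hf (.of_forall hfC)) (hg.pos_part.const_mul M)
    fun x => mul_le_mul_max_zero (hf0 x) (hfM x)

theorem exists_measurable_integral_mul_eq_mul_integral_max_zero {Y : Type*} [MeasurableSpace Y]
    {ℓ : Y → Y → ℝ} (hattainM : ∃ a b, ℓ a b = M) (hattain0 : ∃ c d, ℓ c d = 0)
    (hg : Measurable g) :
    ∃ h₁ h₂ : X → Y, Measurable h₁ ∧ Measurable h₂ ∧
      ∫ x, g x * ℓ (h₁ x) (h₂ x) ∂μ = M * ∫ x, max (g x) 0 ∂μ := by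
  obtain ⟨a, b, hab⟩ := hattainM
  obtain ⟨c, d, hcd⟩ := hattain0
  have hpos : MeasurableSet {x | 0 < g x} := measurableSet_lt measurable_const hg
  refine ⟨fun x => if 0 < g x then a else c, fun x => if 0 < g x then b else d,
    .ite hpos measurable_const measurable_const, .ite hpos measurable_const measurable_const, ?_⟩
  rw [← integral_const_mul]
  congr 1
  ext x
  by_cases hx : 0 < g x
  · simp only [if_pos hx, hab, max_eq_left hx.le, mul_comm]
  · simp only [if_neg hx, hcd, max_eq_right (not_lt.mp hx), mul_zero]

end PositivePart

theorem one_sided_disc_eq_general {X Y' : Type*} [MeasurableSpace X] [MeasurableSpace Y']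
    (ℓ : Y' → Y' → ℝ) (M : ℝ)
    (hmeas : Measurable fun p : Y' × Y' => ℓ p.1 p.2)
    (hnonneg : ∀ a b, 0 ≤ ℓ a b) (hbound : ∀ a b, ℓ a b ≤ M)
    (hattainM : ∃ a b, ℓ a b = M) (hattain0 : ∃ c d, ℓ c d = 0)
    (μ : Measure X)
    (p₁ p₂ : X → ℝ) (hp₁ : Measurable p₁) (hp₂ : Measurable p₂)
    (hp₁0 : ∀ x, 0 ≤ p₁ x) (hp₂0 : ∀ x, 0 ≤ p₂ x)
    (D₁ D₂ : Measure X) [IsProbabilityMeasure D₁] [IsProbabilityMeasure D₂]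
    (hD₁ : D₁ = μ.withDensity fun x => ENNReal.ofReal (p₁ x))
    (hD₂ : D₂ = μ.withDensity fun x => ENNReal.ofReal (p₂ x)) :
    sSup {r | ∃ h₁ ∈ {h : X → Y' | Measurable h}, ∃ h₂ ∈ {h : X → Y' | Measurable h},
        r = expLoss ℓ D₁ h₁ h₂ - expLoss ℓ D₂ h₁ h₂} =
      M * ∫ x, max (p₁ x - p₂ x) 0 ∂μ := by
  subst hD₁ hD₂
  have hi₁ := integrable_of_isProbabilityMeasure_withDensity_ofReal (μ := μ) hp₁ hp₁0
  have hi₂ := integrable_of_isProbabilityMeasure_withDensity_ofReal (μ := μ) hp₂ hp₂0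
  have hdiff : ∀ h₁ h₂ : X → Y', Measurable h₁ → Measurable h₂ →
      expLoss ℓ (μ.withDensity fun x => ENNReal.ofReal (p₁ x)) h₁ h₂ -
          expLoss ℓ (μ.withDensity fun x => ENNReal.ofReal (p₂ x)) h₁ h₂ =
        ∫ x, (p₁ x - p₂ x) * ℓ (h₁ x) (h₂ x) ∂μ := fun h₁ h₂ hh₁ hh₂ =>
    integral_withDensity_sub_integral_withDensity hp₁ hp₂ hp₁0 hp₂0 hi₁ hi₂
      (hmeas.comp (hh₁.prodMk hh₂)).aestronglyMeasurable
      fun x => (Real.norm_of_nonneg (hnonneg _ _)).trans_le (hbound _ _)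
  refine IsGreatest.csSup_eq ⟨?_, ?_⟩
  · obtain ⟨h₁, h₂, hh₁, hh₂, heq⟩ :=
      exists_measurable_integral_mul_eq_mul_integral_max_zero (μ := μ) hattainM hattain0
        (hp₁.sub hp₂)
    exact ⟨h₁, hh₁, h₂, hh₂, ((hdiff h₁ h₂ hh₁ hh₂).trans heq).symm⟩
  · rintro _ ⟨h₁, hh₁, h₂, hh₂, rfl⟩
    rw [hdiff h₁ h₂ hh₁ hh₂]
    exact integral_mul_le_mul_integral_max_zero (hi₁.sub hi₂)
      (hmeas.comp (hh₁.prodMk hh₂)).aestronglyMeasurable (fun _ => hnonneg _ _) fun _ => hbound _ _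

/-- If `ℓ` takes values in `[0, M]`, attains both `M` and `0`, and `ℋ` is the class of
all measurable functions, then the one-sided supremum
`sup_{h₁,h₂ ∈ ℋ} (L_{D₁}(h₁,h₂) − L_{D₂}(h₁,h₂))` equals `M ∫ max(p₁ − p₂, 0) dμ`. -/
theorem one_sided_disc_eq {X Y' : Type*} [MeasurableSpace X] [MeasurableSpace Y']
    (ℓ : Y' → Y' → ℝ) (M : ℝ)
    (hmeas : Measurable fun p : Y' × Y' => ℓ p.1 p.2)
    (hnonneg : ∀ a b, 0 ≤ ℓ a b) (hbound : ∀ a b, ℓ a b ≤ M)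
    (hattainM : ∃ a b, ℓ a b = M) (hattain0 : ∃ c d, ℓ c d = 0)
    (μ : Measure X) [SigmaFinite μ]
    (p₁ p₂ : X → ℝ) (hp₁ : Measurable p₁) (hp₂ : Measurable p₂)
    (hp₁0 : ∀ x, 0 ≤ p₁ x) (hp₂0 : ∀ x, 0 ≤ p₂ x)
    (D₁ D₂ : Measure X) [IsProbabilityMeasure D₁] [IsProbabilityMeasure D₂]
    (hD₁ : D₁ = μ.withDensity fun x => ENNReal.ofReal (p₁ x))
    (hD₂ : D₂ = μ.withDensity fun x => ENNReal.ofReal (p₂ x)) :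
    sSup {r | ∃ h₁ ∈ {h : X → Y' | Measurable h}, ∃ h₂ ∈ {h : X → Y' | Measurable h},
        r = expLoss ℓ D₁ h₁ h₂ - expLoss ℓ D₂ h₁ h₂} =
      M * ∫ x, max (p₁ x - p₂ x) 0 ∂μ :=
  one_sided_disc_eq_general ℓ M hmeas hnonneg hbound hattainM hattain0 μ p₁ p₂ hp₁ hp₂ hp₁0 hp₂0 D₁
    D₂ hD₁ hD₂
end

section
/- Suppose the loss function ℓ is symmetric and obeys the triangle inequality, and suppose f_tr, f_te ∈ ℋ. Let γ ≥ 0 and let h ∈ ℋ be any hypothesis whose training loss satisfies ε_tr(h) ≤ γ. Then ε_te(h) ≥ M_cpt^max − M_cov − γ. -/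
open MeasureTheory

lemma expLoss_triangle {X Y' : Type*} [MeasurableSpace X] (ℓ : Y' → Y' → ℝ)
    (htri : ∀ a b c, ℓ a c ≤ ℓ a b + ℓ b c) (D : Measure X) (a b c : X → Y')
    (iac : Integrable (fun x => ℓ (a x) (c x)) D)
    (iab : Integrable (fun x => ℓ (a x) (b x)) D)
    (ibc : Integrable (fun x => ℓ (b x) (c x)) D) :
    expLoss ℓ D a c ≤ expLoss ℓ D a b + expLoss ℓ D b c := by
  unfold expLoss
  rw [← integral_add iab ibc]
  exact integral_mono iac (iab.add ibc) (fun x => htri _ _ _)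

lemma expLoss_symm {X Y' : Type*} [MeasurableSpace X] (ℓ : Y' → Y' → ℝ)
    (hsymm : ∀ a b, ℓ a b = ℓ b a) (D : Measure X) (a b : X → Y') :
    expLoss ℓ D a b = expLoss ℓ D b a := by
  unfold expLoss; simp only [hsymm]

/-- If `ε_tr(h) ≤ γ` then `ε_te(h) ≥ M_cpt^max − M_cov − γ`. -/
theorem test_loss_lower_bound_of_small_training_loss {X Y' : Type*} [MeasurableSpace X]
    (ℓ : Y' → Y' → ℝ)
    (hnonneg : ∀ a b, 0 ≤ ℓ a b)
    (hsymm : ∀ a b, ℓ a b = ℓ b a)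
    (htri : ∀ a b c, ℓ a c ≤ ℓ a b + ℓ b c)
    (H : Set (X → Y')) (Dtr Dte : Measure X)
    [IsProbabilityMeasure Dtr] [IsProbabilityMeasure Dte]
    (ftr fte : X → Y') (hftr : ftr ∈ H) (hfte : fte ∈ H)
    (hint : ∀ h₁ ∈ insert ftr (insert fte H), ∀ h₂ ∈ insert ftr (insert fte H),
      Integrable (fun x => ℓ (h₁ x) (h₂ x)) Dtr ∧
      Integrable (fun x => ℓ (h₁ x) (h₂ x)) Dte)
    (hbdd : BddAbove {r | ∃ h₁ ∈ H, ∃ h₂ ∈ H,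
      r = |expLoss ℓ Dtr h₁ h₂ - expLoss ℓ Dte h₁ h₂|}) :
    ∀ γ : ℝ, 0 ≤ γ →
      ∀ h ∈ H, expLoss ℓ Dtr h ftr ≤ γ →
        max (expLoss ℓ Dtr ftr fte) (expLoss ℓ Dte ftr fte)
            - disc ℓ H Dtr Dte - γ ≤
          expLoss ℓ Dte h fte := by
  intro γ hγ h hh hγh
  have hftrS : ftr ∈ insert ftr (insert fte H) := Set.mem_insert _ _
  have hfteS : fte ∈ insert ftr (insert fte H) :=
    Set.mem_insert_of_mem _ (Set.mem_insert _ _)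
  have hhS : h ∈ insert ftr (insert fte H) :=
    Set.mem_insert_of_mem _ (Set.mem_insert_of_mem _ hh)
  have hd1 : |expLoss ℓ Dtr h ftr - expLoss ℓ Dte h ftr| ≤ disc ℓ H Dtr Dte :=
    le_csSup hbdd ⟨h, hh, ftr, hftr, rfl⟩
  have hd2 : |expLoss ℓ Dtr h fte - expLoss ℓ Dte h fte| ≤ disc ℓ H Dtr Dte :=
    le_csSup hbdd ⟨h, hh, fte, hfte, rfl⟩
  have e1 : expLoss ℓ Dte ftr h = expLoss ℓ Dte h ftr := expLoss_symm ℓ hsymm _ _ _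
  have e2 : expLoss ℓ Dtr ftr h = expLoss ℓ Dtr h ftr := expLoss_symm ℓ hsymm _ _ _
  have tA : expLoss ℓ Dte ftr fte ≤ expLoss ℓ Dte ftr h + expLoss ℓ Dte h fte :=
    expLoss_triangle ℓ htri Dte ftr h fte (hint _ hftrS _ hfteS).2
      (hint _ hftrS _ hhS).2 (hint _ hhS _ hfteS).2
  have tB : expLoss ℓ Dtr ftr fte ≤ expLoss ℓ Dtr ftr h + expLoss ℓ Dtr h fte :=
    expLoss_triangle ℓ htri Dtr ftr h fte (hint _ hftrS _ hfteS).1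
      (hint _ hftrS _ hhS).1 (hint _ hhS _ hfteS).1
  have a1 := abs_le.mp hd1
  have a2 := abs_le.mp hd2
  rcases max_cases (expLoss ℓ Dtr ftr fte) (expLoss ℓ Dte ftr fte) with ⟨hm, _⟩ | ⟨hm, _⟩ <;>
    rw [hm] <;> linarith [a1.1, a1.2, a2.1, a2.2]
end
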